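/- arXiv:2408.15723 — 3 statements merged into one kernel-verified Lean document; each statement's English description precedes it below -/
import Mathlib

section
/- For each positive integer n and a > 0, with c = a+b, ρ_n(b) = (b)_n/(c)_n and λ_n(b) = ψ(c) − ψ(b) + ψ(n+b) − ψ(n+c), one has lim_{b→0⁺} ρ_n(b)·λ_n(b) = (n−1)!/(a)_n. -/
/-!
Since `(b)ₙ = b (b+1)ₙ₋₁` and `ψ(b) = ψ(b+1) - 1/b`, the singular product `(b)ₙ ψ(b)` equals
`(b)ₙ ψ(b+1) - (b+1)ₙ₋₁`, which is continuous at `b = 0` with value `-(n-1)!`. All other terms of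
`ρₙ(b) λₙ(b)` are continuous at `0` and carry the factor `(b)ₙ`, which vanishes there.
Continuity of the real `ψ` off the poles comes from the complex digamma function, the logarithmic
derivative of `Γ`, which is analytic off the poles as the reciprocal of the entire `1/Γ`.
-/

open Real Filter Set

noncomputable def poch (x : ℝ) (n : ℕ) : ℝ := (ascPochhammer ℝ n).eval x

noncomputable def hyp (a b c x : ℝ) : ℝ :=
  ∑' n : ℕ, poch a n * poch b n / (poch c n * n.factorial) * x ^ n

noncomputable def digamma (x : ℝ) : ℝ := deriv Real.Gamma x / Real.Gamma x

open Topology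

lemma Complex.analyticAt_Gamma {s : ℂ} (hs : ∀ m : ℕ, s ≠ -m) : AnalyticAt ℂ Complex.Gamma s := by
  have h := (Complex.differentiable_one_div_Gamma.analyticAt s).inv
    (by simpa using Complex.Gamma_ne_zero hs)
  rwa [show (fun s => (Complex.Gamma s)⁻¹)⁻¹ = Complex.Gamma by ext; simp] at h

lemma Complex.continuousAt_digamma {s : ℂ} (hs : ∀ m : ℕ, s ≠ -m) :
    ContinuousAt Complex.digamma s :=
  (Complex.analyticAt_Gamma hs).deriv.continuousAt.div
    (Complex.analyticAt_Gamma hs).continuousAt (Complex.Gamma_ne_zero hs)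

lemma digamma_eq_re_complex_digamma (x : ℝ) : digamma x = (Complex.digamma x).re := by
  by_cases! hx : ∃ m : ℕ, x = -m
  · obtain ⟨m, rfl⟩ := hx
    -- at a pole both `Gamma`s vanish, so both sides are the junk value `_ / 0 = 0`
    simp [digamma, Complex.digamma_def, logDeriv_apply, Real.Gamma_neg_nat_eq_zero,
      Complex.Gamma_neg_nat_eq_zero]
  · have hderiv : deriv Real.Gamma x = (deriv Complex.Gamma x).re :=
      (Complex.differentiableAt_Gamma x (by exact_mod_cast hx)).hasDerivAt.real_of_complex.deriv
    rw [digamma, Complex.digamma_def, logDeriv_apply, Complex.Gamma_ofReal, Complex.div_ofReal_re,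
      hderiv]

lemma continuousAt_digamma {x : ℝ} (hx : ∀ m : ℕ, x ≠ -m) : ContinuousAt digamma x := by
  simp only [funext digamma_eq_re_complex_digamma]
  exact Complex.continuous_re.continuousAt.comp <|
    (Complex.continuousAt_digamma (by exact_mod_cast hx)).comp Complex.continuous_ofReal.continuousAt

lemma digamma_add_one {x : ℝ} (hx : ∀ m : ℕ, x ≠ -m) : digamma (x + 1) = digamma x + x⁻¹ := by
  simp only [digamma_eq_re_complex_digamma]
  rw [Complex.ofReal_add, Complex.ofReal_one, Complex.digamma_apply_add_one _ (by exact_mod_cast hx),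
    Complex.add_re, ← Complex.ofReal_inv, Complex.ofReal_re]

lemma ne_neg_natCast_of_pos {x : ℝ} (hx : 0 < x) (m : ℕ) : x ≠ -m := by
  have := m.cast_nonneg (α := ℝ)
  linarith

@[fun_prop]
lemma continuous_poch (n : ℕ) : Continuous fun x => poch x n :=
  (ascPochhammer ℝ n).continuous

lemma poch_succ (x : ℝ) (n : ℕ) : poch x (n + 1) = x * poch (x + 1) n := by
  simp [poch, ascPochhammer_succ_left, Polynomial.eval_comp]

lemma poch_zero_succ (n : ℕ) : poch 0 (n + 1) = 0 := by
  simp [poch_succ]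

lemma poch_one (n : ℕ) : poch 1 n = n.factorial := by
  simp [poch]

lemma poch_mul_digamma {x : ℝ} (hx : ∀ m : ℕ, x ≠ -m) (n : ℕ) :
    poch x (n + 1) * digamma x = poch x (n + 1) * digamma (x + 1) - poch (x + 1) n := by
  have hx0 : x ≠ 0 := by simpa using hx 0
  rw [digamma_add_one hx, poch_succ]
  field_simp
  ring

lemma tendsto_poch_mul_digamma (n : ℕ) :
    Tendsto (fun x => poch x (n + 1) * digamma x) (𝓝[≠] 0) (𝓝 (-n.factorial)) := by
  have hcont : ContinuousAt (fun x => poch x (n + 1) * digamma (x + 1) - poch (x + 1) n) 0 := by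
    have : ContinuousAt (fun x => digamma (x + 1)) 0 :=
      (continuousAt_digamma (by simpa using ne_neg_natCast_of_pos one_pos)).comp (by fun_prop)
    fun_prop
  have hnonpole : ∀ᶠ x : ℝ in 𝓝[≠] 0, ∀ m : ℕ, x ≠ -m := by
    filter_upwards [self_mem_nhdsWithin, nhdsWithin_le_nhds (Ioi_mem_nhds neg_one_lt_zero)]
      with x hx0 hx1 m
    rcases m with _ | m
    · simpa using hx0
    · have := m.cast_nonneg (α := ℝ)
      push_cast
      linarith [mem_Ioi.mp hx1]
  refine Tendsto.congr' (hnonpole.mono fun x hx => (poch_mul_digamma hx n).symm) ?_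
  simpa [poch_zero_succ, poch_one] using hcont.tendsto.mono_left nhdsWithin_le_nhds

theorem stmt5 (a : ℝ) (ha : 0 < a) (n : ℕ) (hn : 1 ≤ n) :
    Filter.Tendsto (fun b : ℝ =>
      poch b n / poch (a + b) n *
        (digamma (a + b) - digamma b + digamma (n + b) - digamma (n + a + b)))
      (nhdsWithin 0 (Set.Ioi 0))
      (nhds ((n - 1).factorial / poch a n)) := by
  obtain ⟨n, rfl⟩ := Nat.exists_eq_add_of_le' hn
  have hpoch : poch (a + 0) (n + 1) ≠ 0 := by
    rw [add_zero]
    exact (ascPochhammer_pos (n + 1) a ha).ne'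
  have hden : ContinuousAt (fun b => poch (a + b) (n + 1)) 0 := by fun_prop
  have hψ : ∀ x : ℝ, 0 < x → ContinuousAt (fun b => digamma (x + b)) 0 := fun x hx =>
    (continuousAt_digamma (by simpa using ne_neg_natCast_of_pos hx)).comp (by fun_prop)
  have hregular : Tendsto (fun b => poch b (n + 1) / poch (a + b) (n + 1) *
      (digamma (a + b) + digamma (↑(n + 1) + b) - digamma (↑(n + 1) + a + b))) (𝓝 0) (𝓝 0) := by
    have hψa := hψ a ha
    have hψn := hψ (↑(n + 1)) (by positivity)
    have hψna := hψ (↑(n + 1) + a) (by positivity)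
    have hcont : ContinuousAt (fun b => poch b (n + 1) / poch (a + b) (n + 1) *
      (digamma (a + b) + digamma (↑(n + 1) + b) - digamma (↑(n + 1) + a + b))) 0 := by
      fun_prop (disch := exact hpoch)
    simpa [poch_zero_succ] using hcont.tendsto
  have hsingular : Tendsto (fun b => poch b (n + 1) * digamma b / poch (a + b) (n + 1))
      (𝓝[>] 0) (𝓝 (-n.factorial / poch (a + 0) (n + 1))) :=
    ((tendsto_poch_mul_digamma n).mono_left (nhdsWithin_mono _ fun b hb => ne_of_gt hb)).div
      (hden.tendsto.mono_left nhdsWithin_le_nhds) hpoch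
  convert (hregular.mono_left nhdsWithin_le_nhds).sub hsingular using 2
  · ring
  · simp [neg_div]
end

section
/- The function h₃(a) = ψ(3/2−a) − ψ(1−a) is absolutely monotone on (0,1): all derivatives h₃^{(n)}(a) are positive for a ∈ (0,1) and n ≥ 0. Its range is (2 − log 4, ∞). -/
open Real Filter Set

open scoped Topology

noncomputable def h3 (a : ℝ) : ℝ := digamma (3 / 2 - a) - digamma (1 - a)

noncomputable def dterm (m k : ℕ) (a : ℝ) : ℝ :=
  ((k : ℝ) + 1 - a)⁻¹ ^ (m + 1) - ((k : ℝ) + 3/2 - a)⁻¹ ^ (m + 1)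

noncomputable def psum (m : ℕ) (a : ℝ) : ℝ := ∑' k : ℕ, dterm m k a

lemma gamma_diff {x : ℝ} (hx : 0 < x) : DifferentiableAt ℝ Real.Gamma x :=
  Real.differentiableAt_Gamma fun m => ((neg_nonpos.mpr m.cast_nonneg).trans_lt hx).ne'

lemma digamma_rec {x : ℝ} (hx : 0 < x) : digamma (x + 1) = digamma x + 1 / x := by
  have h1 : deriv Real.Gamma (x + 1) = Real.Gamma x + x * deriv Real.Gamma x := by
    have hE : (fun y => Real.Gamma (y + 1)) =ᶠ[𝓝 x] fun y => y * Real.Gamma y := by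
      filter_upwards [eventually_gt_nhds hx] with y hy
      exact Real.Gamma_add_one hy.ne'
    have hD : HasDerivAt (fun y => y * Real.Gamma y)
        (1 * Real.Gamma x + x * deriv Real.Gamma x) x :=
      (hasDerivAt_id x).mul (gamma_diff hx).hasDerivAt
    have h2 := hE.deriv_eq
    rw [deriv_comp_add_const] at h2
    rw [h2, hD.deriv]; ring
  have hΓ : Real.Gamma x ≠ 0 := (Real.Gamma_pos_of_pos hx).ne'
  unfold digamma
  rw [h1, Real.Gamma_add_one hx.ne']
  field_simp
  ring

lemma deriv_log_Gamma {x : ℝ} (hx : 0 < x) :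
    deriv (Real.log ∘ Real.Gamma) x = digamma x := by
  rw [Function.comp_def, deriv.log (gamma_diff hx) (Real.Gamma_pos_of_pos hx).ne']
  rfl

lemma digamma_le_log {x : ℝ} (hx : 0 < x) : digamma x ≤ Real.log x := by
  have hc : ConvexOn ℝ (Ioi 0) (Real.log ∘ Real.Gamma) := Real.convexOn_log_Gamma
  have hd : DifferentiableAt ℝ (Real.log ∘ Real.Gamma) x :=
    (gamma_diff hx).log (Real.Gamma_pos_of_pos hx).ne'
  have := hc.deriv_le_slope (mem_Ioi.mpr hx) (mem_Ioi.mpr (by linarith : (0:ℝ) < x + 1))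
    (by linarith) hd
  rw [deriv_log_Gamma hx] at this
  refine this.trans (le_of_eq ?_)
  rw [slope_def_field, show x + 1 - x = (1:ℝ) by ring, div_one, Function.comp_apply,
    Function.comp_apply, Real.Gamma_add_one hx.ne',
    Real.log_mul hx.ne' (Real.Gamma_pos_of_pos hx).ne', add_sub_cancel_right]

lemma log_le_digamma {x : ℝ} (hx : 0 < x) : Real.log x ≤ digamma (x + 1) := by
  have hc : ConvexOn ℝ (Ioi 0) (Real.log ∘ Real.Gamma) := Real.convexOn_log_Gamma
  have hx1 : (0:ℝ) < x + 1 := by linarith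
  have hd : DifferentiableAt ℝ (Real.log ∘ Real.Gamma) (x + 1) :=
    (gamma_diff hx1).log (Real.Gamma_pos_of_pos hx1).ne'
  have := hc.slope_le_deriv (mem_Ioi.mpr hx) (mem_Ioi.mpr hx1) (by linarith) hd
  rw [deriv_log_Gamma hx1] at this
  refine le_trans (le_of_eq ?_) this
  rw [slope_def_field, show x + 1 - x = (1:ℝ) by ring, div_one, Function.comp_apply,
    Function.comp_apply, Real.Gamma_add_one hx.ne',
    Real.log_mul hx.ne' (Real.Gamma_pos_of_pos hx).ne', add_sub_cancel_right]

lemma dterm_pos (m k : ℕ) {a : ℝ} (ha : a < 1) : 0 < dterm m k a := by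
  have h1 : (0:ℝ) < (k : ℝ) + 1 - a := by have := k.cast_nonneg (α := ℝ); linarith
  have h2 : (k : ℝ) + 1 - a < (k : ℝ) + 3/2 - a := by linarith
  have : ((k : ℝ) + 3/2 - a)⁻¹ < ((k : ℝ) + 1 - a)⁻¹ := by
    exact inv_strictAnti₀ h1 h2
  have h3 : (0:ℝ) < ((k : ℝ) + 3/2 - a)⁻¹ := by
    have : (0:ℝ) < (k : ℝ) + 3/2 - a := by linarith
    positivity
  have := pow_lt_pow_left₀ this h3.le (Nat.succ_ne_zero m)
  simpa [dterm] using this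

lemma summable_shift (c : ℝ) (p : ℕ) (hp : 2 ≤ p) (hc : 0 < c) :
    Summable (fun k : ℕ => ((k : ℝ) + c)⁻¹ ^ p) := by
  have base : Summable (fun k : ℕ => ((k : ℝ) + 1)⁻¹ ^ 2) := by
    have := (Real.summable_one_div_nat_pow (p := 2)).mpr one_lt_two
    have h2 := (summable_nat_add_iff (f := fun n : ℕ => 1 / (n : ℝ) ^ 2) 1).mpr this
    refine h2.congr fun n => ?_
    push_cast
    rw [one_div, inv_pow]
  set C : ℝ := 1 + c⁻¹ with hC
  have hC1 : (1:ℝ) ≤ C := by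
    have h : 0 < c⁻¹ := by positivity
    rw [hC]
    linarith
  refine Summable.of_nonneg_of_le (fun k => by positivity)
    (fun k => ?_) ((base.mul_left (C ^ p)))
  have hkc : (0:ℝ) < (k : ℝ) + c := by have := k.cast_nonneg (α := ℝ); linarith
  have hk1 : (0:ℝ) < (k : ℝ) + 1 := by have := k.cast_nonneg (α := ℝ); linarith
  have key : ((k : ℝ) + c)⁻¹ ≤ C * ((k : ℝ) + 1)⁻¹ := by
    rw [inv_le_iff_one_le_mul₀ hkc]
    have h1 : ((k:ℝ) + 1) * (((k:ℝ) + 1)⁻¹) = 1 := mul_inv_cancel₀ hk1.ne'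
    have hCc : ((k:ℝ)+1) ≤ C * ((k:ℝ)+c) := by
      have : c * ((k:ℝ)+1) ≤ (1 + c) * ((k:ℝ)+c) := by nlinarith
      calc ((k:ℝ)+1) = c⁻¹ * (c * ((k:ℝ)+1)) := by field_simp
        _ ≤ c⁻¹ * ((1+c) * ((k:ℝ)+c)) := by
            exact mul_le_mul_of_nonneg_left this (by positivity)
        _ = (c⁻¹ + 1) * ((k:ℝ)+c) := by field_simp
        _ = (c⁻¹ + 1) * ((k:ℝ)+c) := by rfl
        _ = C * ((k:ℝ)+c) := by rw [hC]; ring_nf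
    calc (1:ℝ) = ((k:ℝ)+1) * ((k:ℝ)+1)⁻¹ := h1.symm
      _ ≤ (C * ((k:ℝ)+c)) * ((k:ℝ)+1)⁻¹ := by
          exact mul_le_mul_of_nonneg_right hCc (by positivity)
      _ = C * ((k:ℝ)+1)⁻¹ * ((k:ℝ)+c) := by ring
  calc ((k : ℝ) + c)⁻¹ ^ p ≤ (C * ((k : ℝ) + 1)⁻¹) ^ p :=
        pow_le_pow_left₀ (by positivity) key p
    _ = C ^ p * (((k : ℝ) + 1)⁻¹) ^ p := mul_pow _ _ _
    _ ≤ C ^ p * (((k : ℝ) + 1)⁻¹) ^ 2 := by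
        refine mul_le_mul_of_nonneg_left ?_ (by positivity)
        refine pow_le_pow_of_le_one (by positivity) ?_ hp
        rw [inv_le_one_iff₀]; right; linarith

lemma kpos (k : ℕ) {a : ℝ} (ha : a < 1) : (0:ℝ) < (k:ℝ) + 1 - a := by
  have := k.cast_nonneg (α := ℝ); linarith

lemma dterm_le (m k : ℕ) {a : ℝ} (ha : a < 1) :
    dterm m k a ≤ ((k : ℝ) + (1 - a))⁻¹ ^ (m + 1) := by
  have hx : (0:ℝ) < (k:ℝ) + 3/2 - a := by have := kpos k ha; linarith
  have h2 : (0:ℝ) ≤ ((k : ℝ) + 3/2 - a)⁻¹ ^ (m + 1) := by positivity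
  have he : (k : ℝ) + (1 - a) = (k:ℝ) + 1 - a := by ring
  rw [he, dterm]; linarith

lemma summable_dterm (m : ℕ) {a : ℝ} (ha : a < 1) :
    Summable (fun k : ℕ => dterm m k a) := by
  have hb : 0 < 1 - a := by linarith
  cases m with
  | zero =>
    refine Summable.of_nonneg_of_le (fun k => (dterm_pos 0 k ha).le) (fun k => ?_)
      ((summable_shift (1-a) 2 le_rfl hb).mul_left (1/2))
    have hx : (0:ℝ) < (k:ℝ) + 1 - a := kpos k ha
    have hy : (0:ℝ) < (k:ℝ) + 3/2 - a := by linarith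
    have he : ((k:ℝ) + 1 - a)⁻¹ - ((k:ℝ) + 3/2 - a)⁻¹
        = (1/2) * (((k:ℝ) + 1 - a)⁻¹ * ((k:ℝ) + 3/2 - a)⁻¹) := by
      rw [inv_sub_inv hx.ne' hy.ne',
        show ((k:ℝ) + 3/2 - a) - ((k:ℝ) + 1 - a) = 1/2 by ring, div_eq_mul_inv, mul_inv]
    have hyx : ((k:ℝ) + 3/2 - a)⁻¹ ≤ ((k:ℝ) + 1 - a)⁻¹ :=
      inv_anti₀ hx (by linarith)
    have he2 : (k : ℝ) + (1 - a) = (k:ℝ) + 1 - a := by ring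
    calc dterm 0 k a = ((k:ℝ) + 1 - a)⁻¹ - ((k:ℝ) + 3/2 - a)⁻¹ := by simp [dterm]
      _ = (1/2) * (((k:ℝ) + 1 - a)⁻¹ * ((k:ℝ) + 3/2 - a)⁻¹) := he
      _ ≤ (1/2) * (((k:ℝ) + 1 - a)⁻¹ * ((k:ℝ) + 1 - a)⁻¹) := by
          have h1 : (0:ℝ) ≤ ((k:ℝ) + 1 - a)⁻¹ := by positivity
          nlinarith
      _ = 1/2 * ((k:ℝ) + (1-a))⁻¹ ^ 2 := by rw [he2]; ring
  | succ n =>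
    refine Summable.of_nonneg_of_le (fun k => (dterm_pos _ k ha).le)
      (fun k => dterm_le _ k ha) ?_
    exact summable_shift (1-a) (n+2) (by omega) hb

lemma hasDerivAt_inv_pow_const (c : ℝ) (p : ℕ) {x : ℝ} (hx : c - x ≠ 0) :
    HasDerivAt (fun y => (c - y)⁻¹ ^ (p + 1)) (((p:ℝ) + 1) * (c - x)⁻¹ ^ (p + 2)) x := by
  have h1 : HasDerivAt (fun y : ℝ => c - y) (-1) x := (hasDerivAt_id x).const_sub c
  have h2 := (h1.inv hx).fun_pow (p + 1)
  refine h2.congr_deriv ?_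
  simp only [Nat.add_sub_cancel, neg_neg, one_div, ← inv_pow, Pi.inv_apply]
  push_cast
  ring

lemma hasDerivAt_dterm (m k : ℕ) {x : ℝ} (hx : x < 1) :
    HasDerivAt (fun a => dterm m k a) (((m:ℝ) + 1) * dterm (m + 1) k x) x := by
  have h1 : ((k:ℝ) + 1) - x ≠ 0 := (kpos k hx).ne'
  have h2 : ((k:ℝ) + 3/2) - x ≠ 0 := by
    have := kpos k hx
    have : (0:ℝ) < (k:ℝ) + 3/2 - x := by linarith
    exact this.ne'
  have h := (hasDerivAt_inv_pow_const ((k:ℝ)+1) m h1).sub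
    (hasDerivAt_inv_pow_const ((k:ℝ)+3/2) m h2)
  have he : ((m:ℝ) + 1) * dterm (m + 1) k x
      = ((m:ℝ) + 1) * ((k:ℝ) + 1 - x)⁻¹ ^ (m + 2)
        - ((m:ℝ) + 1) * ((k:ℝ) + 3/2 - x)⁻¹ ^ (m + 2) := by
    simp only [dterm]
    ring
  rw [he]
  exact h

lemma psum_hasDerivAt (m : ℕ) {a : ℝ} (ha : a < 1) :
    HasDerivAt (psum m) (((m:ℝ) + 1) * psum (m + 1) a) a := by
  set b : ℝ := (a + 1) / 2 with hb
  have hb1 : b < 1 := by rw [hb]; linarith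
  have hab : a < b := by rw [hb]; linarith
  set δ : ℝ := 1 - b with hδ
  have hδ0 : 0 < δ := by rw [hδ]; linarith
  have hs : IsOpen (Ioo (a - 1) b) := isOpen_Ioo
  have hmem : a ∈ Ioo (a - 1) b := ⟨by linarith, hab⟩
  have hbound : ∀ (k : ℕ) (x : ℝ), x ∈ Ioo (a - 1) b →
      ‖((m:ℝ) + 1) * dterm (m + 1) k x‖ ≤ ((m:ℝ) + 1) * ((k:ℝ) + δ)⁻¹ ^ (m + 2) := by
    intro k x hx
    have hx1 : x < 1 := hx.2.trans hb1
    have hpos := dterm_pos (m + 1) k hx1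
    have hkd : (0:ℝ) < (k:ℝ) + δ := by have := k.cast_nonneg (α := ℝ); linarith
    rw [norm_mul, norm_of_nonneg hpos.le, Real.norm_of_nonneg (by positivity : (0:ℝ) ≤ (m:ℝ)+1)]
    refine mul_le_mul_of_nonneg_left ?_ (by positivity)
    refine (dterm_le (m + 1) k hx1).trans ?_
    have h1 : (k:ℝ) + δ ≤ (k:ℝ) + (1 - x) := by
      have : x < b := hx.2
      rw [hδ]; linarith
    have hklt : (0:ℝ) < (k:ℝ) + (1 - x) := by linarith
    exact pow_le_pow_left₀ (by positivity) (inv_anti₀ hkd h1) _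
  have hsumu : Summable (fun k : ℕ => ((m:ℝ) + 1) * ((k:ℝ) + δ)⁻¹ ^ (m + 2)) :=
    (summable_shift δ (m + 2) (by omega) hδ0).mul_left _
  have huni := tendstoUniformlyOn_tsum_nat hsumu hbound
  have H := hasDerivAt_of_tendstoUniformlyOn hs huni
    (Eventually.of_forall fun N x hx => HasDerivAt.fun_sum fun k _ =>
      hasDerivAt_dterm m k (hx.2.trans hb1))
    (fun x hx => (summable_dterm m (hx.2.trans hb1)).hasSum.tendsto_sum_nat) hmem
  have : (∑' k : ℕ, ((m:ℝ) + 1) * dterm (m + 1) k a) = ((m:ℝ) + 1) * psum (m + 1) a :=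
    tsum_mul_left
  rwa [this] at H

lemma telescope {a : ℝ} (ha : a < 1) (N : ℕ) :
    h3 a = (∑ k ∈ Finset.range N, dterm 0 k a)
      + (digamma ((N:ℝ) + 3/2 - a) - digamma ((N:ℝ) + 1 - a)) := by
  induction N with
  | zero => simp [h3]
  | succ n ih =>
    rw [ih, Finset.sum_range_succ]
    have h1 : (0:ℝ) < (n:ℝ) + 1 - a := kpos n ha
    have h2 : (0:ℝ) < (n:ℝ) + 3/2 - a := by linarith
    have e1 : ((n:ℝ) + 1) + 3/2 - a = ((n:ℝ) + 3/2 - a) + 1 := by ring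
    have e2 : ((n:ℝ) + 1) + 1 - a = ((n:ℝ) + 1 - a) + 1 := by ring
    push_cast
    rw [e1, e2, digamma_rec h2, digamma_rec h1]
    simp only [dterm]
    push_cast
    ring

lemma remainder_tendsto {a : ℝ} (ha : a < 1) :
    Tendsto (fun N : ℕ => digamma ((N:ℝ) + 3/2 - a) - digamma ((N:ℝ) + 1 - a))
      atTop (𝓝 0) := by
  have hub : ∀ᶠ N : ℕ in atTop,
      digamma ((N:ℝ) + 3/2 - a) - digamma ((N:ℝ) + 1 - a) ≤ (3/2) / ((N:ℝ) - a) := by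
    filter_upwards [eventually_ge_atTop 1] with N hN
    have hN1 : (1:ℝ) ≤ (N:ℝ) := by exact_mod_cast hN
    have hNa : (0:ℝ) < (N:ℝ) - a := by linarith
    have h32 : (0:ℝ) < (N:ℝ) + 3/2 - a := by linarith
    have hupper : digamma ((N:ℝ) + 3/2 - a) ≤ Real.log ((N:ℝ) + 3/2 - a) :=
      digamma_le_log h32
    have hlower : Real.log ((N:ℝ) - a) ≤ digamma ((N:ℝ) + 1 - a) := by
      have := log_le_digamma hNa
      rwa [show (N:ℝ) - a + 1 = (N:ℝ) + 1 - a by ring] at this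
    have hlog : Real.log ((N:ℝ) + 3/2 - a) - Real.log ((N:ℝ) - a) ≤ (3/2) / ((N:ℝ) - a) := by
      rw [← Real.log_div h32.ne' hNa.ne']
      have hd : ((N:ℝ) + 3/2 - a) / ((N:ℝ) - a) = 1 + (3/2) / ((N:ℝ) - a) := by
        rw [show (N:ℝ) + 3/2 - a = ((N:ℝ) - a) + 3/2 by ring, add_div,
          div_self hNa.ne']
      rw [hd]
      have := Real.log_le_sub_one_of_pos (show (0:ℝ) < 1 + (3/2)/((N:ℝ)-a) by positivity)
      linarith
    linarith
  have hlb : ∀ᶠ N : ℕ in atTop,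
      -((1/2) / ((N:ℝ) + 1/2 - a)) ≤ digamma ((N:ℝ) + 3/2 - a) - digamma ((N:ℝ) + 1 - a) := by
    filter_upwards [eventually_ge_atTop 1] with N hN
    have hN1 : (1:ℝ) ≤ (N:ℝ) := by exact_mod_cast hN
    have h12 : (0:ℝ) < (N:ℝ) + 1/2 - a := by linarith
    have h1 : (0:ℝ) < (N:ℝ) + 1 - a := by linarith
    have hlower : Real.log ((N:ℝ) + 1/2 - a) ≤ digamma ((N:ℝ) + 3/2 - a) := by
      have := log_le_digamma h12
      rwa [show (N:ℝ) + 1/2 - a + 1 = (N:ℝ) + 3/2 - a by ring] at this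
    have hupper : digamma ((N:ℝ) + 1 - a) ≤ Real.log ((N:ℝ) + 1 - a) := digamma_le_log h1
    have hlog : Real.log ((N:ℝ) + 1 - a) - Real.log ((N:ℝ) + 1/2 - a)
        ≤ (1/2) / ((N:ℝ) + 1/2 - a) := by
      rw [← Real.log_div h1.ne' h12.ne']
      have hd : ((N:ℝ) + 1 - a) / ((N:ℝ) + 1/2 - a) = 1 + (1/2) / ((N:ℝ) + 1/2 - a) := by
        rw [show (N:ℝ) + 1 - a = ((N:ℝ) + 1/2 - a) + 1/2 by ring, add_div,
          div_self h12.ne']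
      rw [hd]
      have := Real.log_le_sub_one_of_pos (show (0:ℝ) < 1 + (1/2)/((N:ℝ)+1/2-a) by positivity)
      linarith
    linarith
  have t1 : Tendsto (fun N : ℕ => (3/2) / ((N:ℝ) - a)) atTop (𝓝 0) :=
    Tendsto.div_atTop tendsto_const_nhds
      (tendsto_atTop_add_const_right _ (-a) tendsto_natCast_atTop_atTop)
  have t2 : Tendsto (fun N : ℕ => -((1/2) / ((N:ℝ) + 1/2 - a))) atTop (𝓝 0) := by
    rw [← neg_zero]
    refine Tendsto.neg (Tendsto.div_atTop tendsto_const_nhds ?_)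
    have : (fun N : ℕ => (N:ℝ) + 1/2 - a) = fun N : ℕ => (N:ℝ) + (1/2 - a) := by
      funext N; ring
    rw [this]
    exact tendsto_atTop_add_const_right _ _ tendsto_natCast_atTop_atTop
  exact tendsto_of_tendsto_of_tendsto_of_le_of_le' t2 t1 hlb hub

lemma h3_eq {a : ℝ} (ha : a < 1) : h3 a = psum 0 a := by
  have hsum := summable_dterm 0 ha
  have hps : Tendsto (fun N : ℕ => ∑ k ∈ Finset.range N, dterm 0 k a)
      atTop (𝓝 (psum 0 a)) := hsum.hasSum.tendsto_sum_nat
  have hps' : Tendsto (fun N : ℕ => ∑ k ∈ Finset.range N, dterm 0 k a)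
      atTop (𝓝 (h3 a)) := by
    have : (fun N : ℕ => ∑ k ∈ Finset.range N, dterm 0 k a)
        = fun N : ℕ => h3 a - (digamma ((N:ℝ) + 3/2 - a) - digamma ((N:ℝ) + 1 - a)) := by
      funext N
      have := telescope ha N
      linarith
    rw [this]
    have := (remainder_tendsto ha).const_sub (h3 a)
    simpa using this
  exact tendsto_nhds_unique hps' hps

lemma digamma_one : digamma 1 = -Real.eulerMascheroniConstant := by
  unfold digamma
  rw [Real.hasDerivAt_Gamma_one.deriv, Real.Gamma_one, div_one]

lemma digamma_half : digamma (1/2) = -(Real.eulerMascheroniConstant + 2 * Real.log 2) := by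
  unfold digamma
  rw [Real.hasDerivAt_Gamma_one_half.deriv, Real.Gamma_one_half_eq]
  have h : Real.sqrt π ≠ 0 := by
    have := Real.pi_pos
    positivity
  field_simp

lemma h3_zero : h3 0 = 2 - Real.log 4 := by
  have h32 : digamma (3/2) = digamma (1/2) + 2 := by
    have := digamma_rec (show (0:ℝ) < 1/2 by norm_num)
    norm_num at this
    convert this using 2 <;> norm_num
  have hlog4 : Real.log 4 = 2 * Real.log 2 := by
    rw [show (4:ℝ) = 2 ^ 2 by norm_num, Real.log_pow]
    push_cast; ring
  unfold h3
  rw [sub_zero, sub_zero, h32, digamma_half, digamma_one, hlog4]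
  ring

lemma psum_pos (m : ℕ) {a : ℝ} (ha : a < 1) : 0 < psum m a :=
  Summable.tsum_pos (summable_dterm m ha) (fun k => (dterm_pos m k ha).le) 0 (dterm_pos m 0 ha)

lemma iter_eq (n : ℕ) : ∀ {a : ℝ}, a < 1 → iteratedDeriv n h3 a = (n.factorial : ℝ) * psum n a := by
  induction n with
  | zero => intro a ha; simp [iteratedDeriv_zero, h3_eq ha]
  | succ n ih =>
    intro a ha
    rw [iteratedDeriv_succ]
    have hE : iteratedDeriv n h3 =ᶠ[𝓝 a] fun x => (n.factorial : ℝ) * psum n x := by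
      filter_upwards [Iio_mem_nhds ha] with x hx using ih hx
    rw [hE.deriv_eq]
    have hD : HasDerivAt (fun x => (n.factorial : ℝ) * psum n x)
        ((n.factorial : ℝ) * (((n:ℝ) + 1) * psum (n + 1) a)) a :=
      (psum_hasDerivAt n ha).const_mul _
    rw [hD.deriv]
    rw [Nat.factorial_succ]
    push_cast
    ring

lemma h3_hasDerivAt {a : ℝ} (ha : a < 1) : HasDerivAt h3 (psum 1 a) a := by
  have h := psum_hasDerivAt 0 ha
  norm_num at h
  have hE : h3 =ᶠ[𝓝 a] psum 0 := by
    filter_upwards [Iio_mem_nhds ha] with x hx using h3_eq hx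
  exact h.congr_of_eventuallyEq hE

lemma h3_mono : StrictMonoOn h3 (Iio 1) := by
  refine strictMonoOn_of_deriv_pos (convex_Iio 1) ?_ ?_
  · exact fun x hx => ((h3_hasDerivAt hx).continuousAt).continuousWithinAt
  · intro x hx
    rw [interior_Iio] at hx
    rw [(h3_hasDerivAt hx).deriv]
    exact psum_pos 1 hx

theorem stmt8 :
    (∀ n : ℕ, ∀ a ∈ Set.Ioo (0 : ℝ) 1, 0 < iteratedDeriv n h3 a) ∧
    h3 '' (Set.Ioo 0 1) = Set.Ioi (2 - Real.log 4) := by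
  constructor
  · intro n a ha
    rw [iter_eq n ha.2]
    have h1 : (0:ℝ) < (n.factorial : ℝ) := by exact_mod_cast n.factorial_pos
    exact mul_pos h1 (psum_pos n ha.2)
  · ext y
    simp only [mem_image, mem_Ioi]
    constructor
    · rintro ⟨x, hx, rfl⟩
      rw [← h3_zero]
      exact h3_mono (mem_Iio.mpr one_pos) (mem_Iio.mpr hx.2) hx.1
    · intro hy
      set M : ℝ := max y 0 + 3 with hM
      have hM3 : (3:ℝ) ≤ M := by
        have : (0:ℝ) ≤ max y 0 := le_max_right y 0
        linarith
      have hMpos : (0:ℝ) < M := by linarith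
      set b : ℝ := 1 - 1/M with hb
      have h1M : 1/M ≤ 1/3 := by
        apply div_le_div_of_nonneg_left (by norm_num) (by norm_num) hM3
      have h1Mpos : 0 < 1/M := by positivity
      have hb0 : (0:ℝ) < b := by rw [hb]; linarith
      have hb1 : b < 1 := by rw [hb]; linarith
      have hyb : y < h3 b := by
        rw [h3_eq hb1]
        have hle : dterm 0 0 b ≤ psum 0 b :=
          Summable.le_tsum (summable_dterm 0 hb1) 0 (fun k _ => (dterm_pos 0 k hb1).le)
        have hval : M - 2 ≤ dterm 0 0 b := by
          have h1b : (0:ℝ) + 1 - b = 1/M := by rw [hb]; push_cast; ring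
          have h2b : (0:ℝ) < (0:ℕ) + 3/2 - b := by push_cast; linarith
          have hinv2 : ((0:ℝ) + 3/2 - b)⁻¹ ≤ 2 := by
            rw [show (2:ℝ) = (1/2)⁻¹ by norm_num]
            apply inv_anti₀ (by norm_num)
            linarith
          simp only [dterm, Nat.cast_zero, pow_one]
          have : ((0:ℝ) + 1 - b)⁻¹ = M := by rw [h1b, one_div, inv_inv]
          push_cast at this hinv2 ⊢
          rw [this]
          linarith
        have hyM : y ≤ M - 3 := by
          have := le_max_left y 0
          linarith
        linarith
      have hcont : ContinuousOn h3 (Icc 0 b) := fun x hx =>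
        ((h3_hasDerivAt (lt_of_le_of_lt hx.2 hb1)).continuousAt).continuousWithinAt
      have hIVT := intermediate_value_Ioc hb0.le hcont
      have hymem : y ∈ Ioc (h3 0) (h3 b) := ⟨by rwa [h3_zero], hyb.le⟩
      obtain ⟨c, hc, hcy⟩ := hIVT hymem
      exact ⟨c, ⟨hc.1, lt_of_le_of_lt hc.2 hb1⟩, hcy⟩
end

section
/- For each fixed r ∈ (0,1), the function a ↦ 1 − η(a)/₂F₁(a, 1−a; 1; r), where η(a) = a/(3−2a), is strictly decreasing from (0,1) onto (0,1), and lim_{a→1⁻} [1 − η(a)/₂F₁(a,1−a;1;r)]/(1−a) = 3 − log(1−r). -/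
set_option maxHeartbeats 1000000
set_option linter.unusedVariables false
set_option linter.unusedTactic false
set_option linter.unreachableTactic false

open Real Filter Set

namespace Stmt12

variable {r a : ℝ}

noncomputable def cf (a : ℝ) (n : ℕ) : ℝ := ∏ k ∈ Finset.range n, ((k*(k+1) : ℝ) + a*(1-a))

noncomputable def sf (a : ℝ) : ℕ → ℝ
  | 0 => 0
  | n+1 => sf a n * ((n*(n+1) : ℝ) + a*(1-a)) + cf a n

noncomputable def F (r a : ℝ) : ℝ := ∑' n : ℕ, cf a n / ((n.factorial : ℝ))^2 * r ^ n
noncomputable def S (r a : ℝ) : ℝ := ∑' n : ℕ, sf a n / ((n.factorial : ℝ))^2 * r ^ n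
noncomputable def ccf (a : ℝ) (n : ℕ) : ℝ := ∏ k ∈ Finset.range n, (((k+1)*(k+2) : ℝ) + a*(1-a))
noncomputable def Hs (r a : ℝ) : ℝ := ∑' n : ℕ, ccf a n / (((n+1).factorial : ℝ))^2 * r ^ (n+1)

lemma poch_eq (x : ℝ) (n : ℕ) : poch x n = ∏ k ∈ Finset.range n, (x + k) := by
  induction n with
  | zero => simp [poch]
  | succ n ih =>
    rw [poch, ascPochhammer_succ_right, Polynomial.eval_mul, Finset.prod_range_succ, ← poch, ih]
    simp

lemma poch_one (n : ℕ) : poch 1 n = n.factorial := by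
  rw [poch, ascPochhammer_eval_one]

lemma fact_sq (n : ℕ) : ∏ k ∈ Finset.range n, ((k:ℝ)+1)^2 = ((n.factorial : ℝ))^2 := by
  induction n with
  | zero => simp
  | succ n ih => rw [Finset.prod_range_succ, ih, Nat.factorial_succ]; push_cast; ring

lemma hyp_eq (r a : ℝ) : hyp a (1 - a) 1 r = F r a := by
  refine tsum_congr fun n => ?_
  rw [poch_eq, poch_eq, poch_one, ← Finset.prod_mul_distrib]
  have : ∏ k ∈ Finset.range n, (a + ↑k) * (1 - a + ↑k)
      = ∏ k ∈ Finset.range n, ((k*(k+1) : ℝ) + a*(1-a)) := by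
    refine Finset.prod_congr rfl fun k _ => by push_cast; ring
  rw [this, ← cf]
  congr 1
  rw [sq]


lemma cf_nonneg (ht : 0 ≤ a * (1 - a)) (n : ℕ) : 0 ≤ cf a n :=
  Finset.prod_nonneg fun k _ => by positivity

lemma cf_le (ht : 0 ≤ a * (1 - a)) (ht4 : a * (1 - a) ≤ 1/4) (n : ℕ) :
    cf a n ≤ ((n.factorial : ℝ))^2 := by
  rw [← fact_sq]
  refine Finset.prod_le_prod (fun k _ => by positivity) fun k _ => by nlinarith [Nat.cast_nonneg (α := ℝ) k]

lemma sf_nonneg (ht : 0 ≤ a * (1 - a)) (n : ℕ) : 0 ≤ sf a n := by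
  induction n with
  | zero => exact le_refl 0
  | succ n ih =>
    have := cf_nonneg ht n
    have hk : (0:ℝ) ≤ (n*(n+1) : ℝ) + a*(1-a) := by positivity
    simpa [sf] using add_nonneg (mul_nonneg ih hk) this

lemma summable_cf (hr : r ∈ Set.Ioo (0:ℝ) 1) (ht : 0 ≤ a * (1 - a)) (ht4 : a * (1 - a) ≤ 1/4) :
    Summable (fun n => cf a n / ((n.factorial : ℝ))^2 * r ^ n) := by
  refine Summable.of_nonneg_of_le (fun n => by
      have := cf_nonneg ht n
      have : (0:ℝ) ≤ cf a n / ((n.factorial : ℝ))^2 := by positivity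
      exact mul_nonneg this (pow_nonneg hr.1.le n))
    (fun n => ?_) (summable_geometric_of_lt_one hr.1.le hr.2)
  have h1 : cf a n / ((n.factorial : ℝ))^2 ≤ 1 := by
    rw [div_le_one (by positivity)]
    exact cf_le ht ht4 n
  calc cf a n / ((n.factorial : ℝ))^2 * r ^ n ≤ 1 * r ^ n := by
        exact mul_le_mul_of_nonneg_right h1 (pow_nonneg hr.1.le n)
    _ = r ^ n := one_mul _


lemma cf_succ (n : ℕ) : cf a (n+1) = cf a n * ((n*(n+1) : ℝ) + a*(1-a)) :=
  Finset.prod_range_succ _ n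


private lemma poly_aux (N t c s : ℝ) (hN : 1 ≤ N) (ht : 0 ≤ t) (hc : 0 ≤ c)
    (ih : N*t*s ≤ (N+N*t-t)*c) :
    (N+1)*t*(s*(N*(N+1)+t)+c) ≤ ((N+1)+(N+1)*t-t)*(c*(N*(N+1)+t)) := by
  have key : N*((N+1)*t*(s*(N*(N+1)+t)+c)) ≤ N*(((N+1)+(N+1)*t-t)*(c*(N*(N+1)+t))) := by
    nlinarith [mul_le_mul_of_nonneg_left ih (by positivity : (0:ℝ) ≤ (N+1)*(N*(N+1)+t)),
      mul_nonneg hc (sq_nonneg t), mul_nonneg (mul_nonneg hc ht) (by linarith : (0:ℝ) ≤ N)]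
  exact le_of_mul_le_mul_left key (by linarith)

/-- key bound: n * t * s_n ≤ (n + n t - t) c_n for n ≥ 1 -/
lemma sf_key (ht : 0 ≤ a * (1 - a)) :
    ∀ n : ℕ, 1 ≤ n →
      (n : ℝ) * (a*(1-a)) * sf a n ≤ ((n : ℝ) + (n : ℝ) * (a*(1-a)) - a*(1-a)) * cf a n := by
  intro n hn
  induction n, hn using Nat.le_induction with
  | base => simp [sf, cf_succ, cf]
  | succ n hn ih =>
    have hn1 : (1:ℝ) ≤ (n:ℝ) := by exact_mod_cast hn
    have h := poly_aux (n:ℝ) (a*(1-a)) (cf a n) (sf a n) hn1 ht (cf_nonneg ht n) ih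
    have e1 : sf a (n+1) = sf a n * ((n*(n+1) : ℝ) + a*(1-a)) + cf a n := rfl
    rw [cf_succ, e1]
    push_cast
    convert h using 1 <;> ring

/-- consequence: t * s_n ≤ (1+t) * c_n for n ≥ 1 -/
lemma sf_le (ht : 0 ≤ a * (1 - a)) (n : ℕ) (hn : 1 ≤ n) :
    (a*(1-a)) * sf a n ≤ (1 + a*(1-a)) * cf a n := by
  have h := sf_key ht n hn
  have hn1 : (1:ℝ) ≤ (n:ℝ) := by exact_mod_cast hn
  have hc := cf_nonneg ht n
  have key : (n:ℝ) * ((a*(1-a)) * sf a n) ≤ (n:ℝ) * ((1 + a*(1-a)) * cf a n) := by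
    nlinarith [mul_nonneg hc ht]
  exact le_of_mul_le_mul_left key (by linarith)

lemma hasDerivAt_cf (n : ℕ) (a : ℝ) :
    HasDerivAt (fun x => cf x n) ((1 - 2*a) * sf a n) a := by
  induction n with
  | zero =>
    simpa [cf, sf] using (hasDerivAt_const a (1:ℝ))
  | succ n ih =>
    have ht : HasDerivAt (fun x : ℝ => (n*(n+1) : ℝ) + x*(1-x)) (1 - 2*a) a := by
      have h1 : HasDerivAt (fun x : ℝ => x*(1-x)) (1 - 2*a) a := by
        have : HasDerivAt (fun x : ℝ => x*(1-x)) _ a := (hasDerivAt_id a).mul ((hasDerivAt_const a (1:ℝ)).sub (hasDerivAt_id a))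
        convert this using 1
        simp [id]; ring
      simpa using (HasDerivAt.const_add ((n*(n+1) : ℝ)) h1)
    have : HasDerivAt (fun x => cf x n * ((n*(n+1) : ℝ) + x*(1-x))) _ a := ih.mul ht
    have e : (fun x => cf x (n+1)) = fun x => cf x n * ((n*(n+1) : ℝ) + x*(1-x)) := by
      funext x; exact cf_succ n
    rw [e]
    convert this using 1
    show (1 - 2*a) * (sf a n * ((n*(n+1) : ℝ) + a*(1-a)) + cf a n) = _
    ring

lemma mem_Ioo_t {x : ℝ} (hx : x ∈ Set.Ioo (0:ℝ) 1) : 0 < x * (1-x) ∧ x * (1-x) ≤ 1/4 := by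
  constructor
  · have := hx.1; have := hx.2; nlinarith
  · nlinarith [sq_nonneg (1 - 2*x)]

lemma sf_div_le {x : ℝ} (hx : x ∈ Set.Ioo (0:ℝ) 1) (δ : ℝ) (hδ : 0 < δ) (hδx : δ ≤ x*(1-x))
    (n : ℕ) : sf x n / ((n.factorial : ℝ))^2 ≤ 2/δ := by
  obtain ⟨ht0, ht4⟩ := mem_Ioo_t hx
  rcases Nat.eq_zero_or_pos n with h0 | h1
  · subst h0; simp [sf]; positivity
  · have h := sf_le ht0.le n h1
    have hcle := cf_le ht0.le ht4 n
    have hc0 := cf_nonneg ht0.le n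
    rw [div_le_div_iff₀ (by positivity) hδ]
    have h2 : sf x n * δ ≤ sf x n * (x*(1-x)) :=
      mul_le_mul_of_nonneg_left hδx (sf_nonneg ht0.le n)
    calc sf x n * δ ≤ (x*(1-x)) * sf x n := by linarith [h2]
      _ ≤ (1 + x*(1-x)) * cf x n := h
      _ ≤ 2 * ((n.factorial:ℝ))^2 := by nlinarith

lemma summable_sf (hr : r ∈ Set.Ioo (0:ℝ) 1) (hx : a ∈ Set.Ioo (0:ℝ) 1) :
    Summable (fun n => sf a n / ((n.factorial : ℝ))^2 * r ^ n) := by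
  obtain ⟨ht0, ht4⟩ := mem_Ioo_t hx
  refine Summable.of_nonneg_of_le (fun n => mul_nonneg (div_nonneg (sf_nonneg ht0.le n)
      (by positivity)) (pow_nonneg hr.1.le n)) (fun n => ?_)
    ((summable_geometric_of_lt_one hr.1.le hr.2).mul_left (2/(a*(1-a))))
  exact mul_le_mul_of_nonneg_right (sf_div_le hx _ ht0 le_rfl n) (pow_nonneg hr.1.le n)

lemma hasDerivAt_F (hr : r ∈ Set.Ioo (0:ℝ) 1) (ha : a ∈ Set.Ioo (0:ℝ) 1) :
    HasDerivAt (F r) ((1 - 2*a) * S r a) a := by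
  obtain ⟨ha0, ha1⟩ := ha
  set α := a/2 with hα
  set β := (1+a)/2 with hβ
  have hsub : Set.Ioo α β ⊆ Set.Ioo (0:ℝ) 1 := by
    intro x hx
    have h1 : a/2 < x := hx.1
    have h2 : x < (1+a)/2 := hx.2
    exact ⟨by linarith, by linarith⟩
  set δ := (a/2) * ((1-a)/2) with hδdef
  have hδ : 0 < δ := by rw [hδdef]; have : (0:ℝ) < 1 - a := by linarith
                        positivity
  have hδle : ∀ x ∈ Set.Ioo α β, δ ≤ x * (1-x) := by
    intro x hx
    have h1 : a/2 < x := hx.1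
    have h2 : x < (1+a)/2 := hx.2
    nlinarith
  have key := hasDerivAt_tsum_of_isPreconnected
    (u := fun n => 2/δ * r^n)
    (g := fun n x => cf x n / ((n.factorial : ℝ))^2 * r^n)
    (g' := fun n x => ((1-2*x) * sf x n)/((n.factorial : ℝ))^2 * r^n)
    (((summable_geometric_of_lt_one hr.1.le hr.2).mul_left (2/δ)))
    isOpen_Ioo (convex_Ioo α β).isPreconnected
    (fun n y _ => ((hasDerivAt_cf n y).div_const _).mul_const _)
    (fun n y hy => ?_) (y₀ := a) ?_ ?_ (y := a) ?_
  · have e : (fun n : ℕ => ((1-2*a) * sf a n)/((n.factorial : ℝ))^2 * r^n)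
        = fun n : ℕ => (1-2*a) * (sf a n/((n.factorial : ℝ))^2 * r^n) := by
      funext n; ring
    rw [e, tsum_mul_left] at key
    exact key
  · -- bound on derivative
    have hy1 := hsub hy
    have hs0 := sf_nonneg (mem_Ioo_t hy1).1.le n
    have e : ((1-2*y) * sf y n)/((n.factorial : ℝ))^2 * r^n
        = (1-2*y) * (sf y n/((n.factorial : ℝ))^2 * r^n) := by ring
    show |((1-2*y) * sf y n)/((n.factorial : ℝ))^2 * r^n| ≤ 2/δ * r^n
    rw [e, abs_mul]
    have h1 : |1-2*y| ≤ 1 := by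
      rw [abs_le]; exact ⟨by linarith [hy1.2], by linarith [hy1.1]⟩
    have h2 : |sf y n/((n.factorial : ℝ))^2 * r^n| ≤ 2/δ * r^n := by
      rw [abs_of_nonneg (mul_nonneg (div_nonneg hs0 (by positivity)) (pow_nonneg hr.1.le n))]
      exact mul_le_mul_of_nonneg_right (sf_div_le hy1 δ hδ (hδle y hy) n) (pow_nonneg hr.1.le n)
    calc |1-2*y| * |sf y n/((n.factorial : ℝ))^2 * r^n| ≤ 1 * (2/δ * r^n) :=
          mul_le_mul h1 h2 (abs_nonneg _) zero_le_one
      _ = 2/δ * r^n := one_mul _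
  · exact ⟨by simp only [hα]; linarith, by simp only [hβ]; linarith⟩
  · exact summable_cf hr (mem_Ioo_t ⟨ha0, ha1⟩).1.le (mem_Ioo_t ⟨ha0, ha1⟩).2
  · exact ⟨by simp only [hα]; linarith, by simp only [hβ]; linarith⟩

lemma F_ge_one (hr : r ∈ Set.Ioo (0:ℝ) 1) (ht : 0 ≤ a * (1 - a)) (ht4 : a * (1 - a) ≤ 1/4) :
    1 ≤ F r a := by
  have h0 : cf a 0 / ((Nat.factorial 0 : ℝ))^2 * r ^ 0 = 1 := by simp [cf]
  calc (1:ℝ) = cf a 0 / ((Nat.factorial 0 : ℝ))^2 * r ^ 0 := h0.symm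
    _ ≤ F r a := Summable.le_tsum (summable_cf hr ht ht4) 0 fun n _ =>
        mul_nonneg (div_nonneg (cf_nonneg ht n) (by positivity)) (pow_nonneg hr.1.le n)

lemma F_pos (hr : r ∈ Set.Ioo (0:ℝ) 1) (ht : 0 ≤ a * (1 - a)) (ht4 : a * (1 - a) ≤ 1/4) :
    0 < F r a := lt_of_lt_of_le one_pos (F_ge_one hr ht ht4)

lemma F_sub_one (hr : r ∈ Set.Ioo (0:ℝ) 1) (ht : 0 ≤ a * (1 - a)) (ht4 : a * (1 - a) ≤ 1/4) :
    F r a - 1 = ∑' n : ℕ, cf a (n+1) / (((n+1).factorial : ℝ))^2 * r ^ (n+1) := by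
  rw [F, Summable.tsum_eq_zero_add (summable_cf hr ht ht4)]
  norm_num [cf]

lemma S_nonneg (hr : r ∈ Set.Ioo (0:ℝ) 1) (ht : 0 ≤ a * (1 - a)) : 0 ≤ S r a :=
  tsum_nonneg fun n =>
    mul_nonneg (div_nonneg (sf_nonneg ht n) (by positivity)) (pow_nonneg hr.1.le n)

lemma S_le (hr : r ∈ Set.Ioo (0:ℝ) 1) (ha : a ∈ Set.Ioo (0:ℝ) 1) :
    (a*(1-a)) * S r a ≤ (1 + a*(1-a)) * (F r a - 1) := by
  obtain ⟨ht0, ht4⟩ := mem_Ioo_t ha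
  rw [F_sub_one hr ht0.le ht4]
  have hsum_s := summable_sf hr ha
  have hsum_c := summable_cf hr ht0.le ht4
  have hs1 : Summable (fun n : ℕ => sf a (n+1) / (((n+1).factorial : ℝ))^2 * r ^ (n+1)) :=
    (summable_nat_add_iff 1).2 hsum_s
  have hc1 : Summable (fun n : ℕ => cf a (n+1) / (((n+1).factorial : ℝ))^2 * r ^ (n+1)) :=
    (summable_nat_add_iff 1).2 hsum_c
  have hS : S r a = ∑' n : ℕ, sf a (n+1) / (((n+1).factorial : ℝ))^2 * r ^ (n+1) := by
    rw [S, Summable.tsum_eq_zero_add hsum_s]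
    simp [sf]
  rw [hS, ← tsum_mul_left, ← tsum_mul_left]
  refine Summable.tsum_le_tsum (fun n => ?_) (hs1.mul_left _) (hc1.mul_left _)
  have key := sf_le ht0.le (n+1) (Nat.le_add_left 1 n)
  have hrn : (0:ℝ) ≤ r ^ (n+1) / (((n+1).factorial : ℝ))^2 :=
    div_nonneg (pow_nonneg hr.1.le _) (by positivity)
  calc a*(1-a) * (sf a (n+1) / (((n+1).factorial : ℝ))^2 * r ^ (n+1))
      = ((a*(1-a)) * sf a (n+1)) * (r ^ (n+1) / (((n+1).factorial : ℝ))^2) := by ring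
    _ ≤ ((1 + a*(1-a)) * cf a (n+1)) * (r ^ (n+1) / (((n+1).factorial : ℝ))^2) :=
        mul_le_mul_of_nonneg_right key hrn
    _ = (1 + a*(1-a)) * (cf a (n+1) / (((n+1).factorial : ℝ))^2 * r ^ (n+1)) := by ring

lemma num_pos {a Fv Sv : ℝ} (ha : a ∈ Set.Ioo (0:ℝ) 1) (hF : 1 ≤ Fv) (hS : 0 ≤ Sv)
    (hle : a*(1-a)*Sv ≤ (1+a*(1-a))*(Fv-1)) :
    0 < 3/(3-2*a)^2 * Fv - a/(3-2*a) * ((1-2*a)*Sv) := by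
  obtain ⟨ha0, ha1⟩ := ha
  have h3 : (0:ℝ) < 3-2*a := by linarith
  have h1a : (0:ℝ) < 1-a := by linarith
  have key : 0 < 3*Fv - a*(3-2*a)*(1-2*a)*Sv := by
    rcases le_or_gt (1/2) a with hc | hc
    · have h2 : (0:ℝ) ≤ 2*a-1 := by linarith
      nlinarith [mul_nonneg (mul_nonneg (mul_nonneg ha0.le h3.le) h2) hS]
    · have h12 : 12*a*a ≤ 6*a := by nlinarith [mul_pos ha0 (show (0:ℝ) < 1-2*a by linarith)]
      have h4 : (3-2*a)*(1-2*a)*(1+a*(1-a)) ≤ 3*(1-a) := by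
        nlinarith [mul_nonneg ha0.le (mul_nonneg ha0.le (mul_nonneg ha0.le ha0.le)),
          mul_le_mul_of_nonneg_left h12 ha0.le]
      have h5 : (0:ℝ) ≤ (3-2*a)*(1-2*a) := by nlinarith
      have h6 := mul_le_mul_of_nonneg_left hle h5
      have h7 := mul_le_mul_of_nonneg_right h4 (by linarith : (0:ℝ) ≤ Fv - 1)
      nlinarith [mul_nonneg h1a.le (by linarith : (0:ℝ) ≤ Fv - 1)]
  have e : 3/(3-2*a)^2 * Fv - a/(3-2*a) * ((1-2*a)*Sv)
      = (3*Fv - a*(3-2*a)*(1-2*a)*Sv)/(3-2*a)^2 := by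
    field_simp
  rw [e]
  positivity

noncomputable def phi (r a : ℝ) : ℝ := (a/(3-2*a)) / F r a

lemma hasDerivAt_eta (ha : a ∈ Set.Ioo (0:ℝ) 1) :
    HasDerivAt (fun x : ℝ => x/(3-2*x)) (3/(3-2*a)^2) a := by
  have h3 : (3:ℝ)-2*a ≠ 0 := by have := ha.2; intro h; nlinarith [ha.1]
  have hd : HasDerivAt (fun x : ℝ => 3-2*x) (-2) a := by
    simpa using ((hasDerivAt_id a).const_mul (2:ℝ)).const_sub 3
  have : HasDerivAt (fun x : ℝ => x/(3-2*x)) _ a := (hasDerivAt_id a).div hd h3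
  convert this using 1
  simp only [id]
  field_simp
  ring

lemma hasDerivAt_phi (hr : r ∈ Set.Ioo (0:ℝ) 1) (ha : a ∈ Set.Ioo (0:ℝ) 1) :
    HasDerivAt (phi r)
      ((3/(3-2*a)^2 * F r a - a/(3-2*a) * ((1-2*a) * S r a)) / (F r a)^2) a := by
  have hFne : F r a ≠ 0 := by linarith [F_ge_one hr (mem_Ioo_t ha).1.le (mem_Ioo_t ha).2]
  exact (hasDerivAt_eta ha).div (hasDerivAt_F hr ha) hFne

lemma strictMonoOn_phi (hr : r ∈ Set.Ioo (0:ℝ) 1) : StrictMonoOn (phi r) (Set.Ioo 0 1) := by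
  refine strictMonoOn_of_deriv_pos (convex_Ioo 0 1) ?_ ?_
  · intro x hx
    exact ((hasDerivAt_phi hr hx).continuousAt).continuousWithinAt
  · intro x hx
    rw [interior_Ioo] at hx
    rw [(hasDerivAt_phi hr hx).deriv]
    have h1 := F_ge_one hr (mem_Ioo_t hx).1.le (mem_Ioo_t hx).2
    apply div_pos (num_pos hx h1 (S_nonneg hr (mem_Ioo_t hx).1.le) ?_) (by positivity)
    · have h := S_le hr hx; linarith [h]

lemma cf_succ' (n : ℕ) : cf a (n+1) = (a*(1-a)) * ccf a n := by
  rw [cf, Finset.prod_range_succ', ccf]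
  have h : ∀ k ∈ Finset.range n, (((k+1 : ℕ) : ℝ) * (((k+1 : ℕ) : ℝ)+1) + a*(1-a))
      = (((k:ℝ)+1)*((k:ℝ)+2) + a*(1-a)) := fun k _ => by push_cast; ring
  rw [Finset.prod_congr rfl h]
  push_cast
  ring

lemma ccf_nonneg (ht : 0 ≤ a * (1 - a)) (n : ℕ) : 0 ≤ ccf a n :=
  Finset.prod_nonneg fun k _ => by positivity

lemma ccf_succ (a : ℝ) (n : ℕ) :
    ccf a (n+1) = ccf a n * (((n:ℝ)+1)*((n:ℝ)+2) + a*(1-a)) := by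
  rw [ccf, Finset.prod_range_succ, ← ccf]

lemma fact_sq2 (n : ℕ) : ∏ k ∈ Finset.range n, ((k:ℝ)+2)^2 = (((n+1).factorial : ℝ))^2 := by
  induction n with
  | zero => simp
  | succ n ih =>
    have hf : ((n+1+1).factorial : ℝ) = ((n:ℝ)+2) * ((n+1).factorial : ℝ) := by
      rw [Nat.factorial_succ]; push_cast; ring
    rw [Finset.prod_range_succ, ih, hf]
    ring

lemma ccf_le (ht : 0 ≤ a * (1 - a)) (ht4 : a * (1 - a) ≤ 1/4) (n : ℕ) :
    ccf a n ≤ (((n+1).factorial : ℝ))^2 := by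
  rw [← fact_sq2]
  refine Finset.prod_le_prod (fun k _ => by positivity) fun k _ => ?_
  have : (0:ℝ) ≤ (k:ℝ) := Nat.cast_nonneg k
  nlinarith

lemma ccf_mono (ht : 0 ≤ a * (1 - a)) (n : ℕ) : ccf 0 n ≤ ccf a n := by
  refine Finset.prod_le_prod (fun k _ => by norm_num; positivity) fun k _ => by norm_num; linarith

lemma ccf_diff (ht : 0 ≤ a * (1 - a)) (ht4 : a * (1 - a) ≤ 1/4) (n : ℕ) :
    ccf a n - ccf 0 n ≤ 2*(a*(1-a))*(((n+1).factorial : ℝ))^2 := by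
  induction n with
  | zero => simp [ccf]; positivity
  | succ n ih =>
    have e1 : ccf a (n+1) = ccf a n * (((n:ℝ)+1)*((n:ℝ)+2) + a*(1-a)) := ccf_succ a n
    have e2 : ccf 0 (n+1) = ccf 0 n * (((n:ℝ)+1)*((n:ℝ)+2)) := by
      rw [ccf_succ]; norm_num
    have hle := ccf_le ht ht4 n
    have h0 := ccf_nonneg ht n
    have h0' := ccf_nonneg (by norm_num : (0:ℝ) ≤ 0*(1-0)) n
    have hmono := ccf_mono ht n
    have hfact : (((n+2).factorial : ℝ))^2 = (((n+1).factorial : ℝ))^2 * ((n:ℝ)+2)^2 := by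
      rw [Nat.factorial_succ]; push_cast; ring
    rw [e1, e2, hfact]
    have hn0 : (0:ℝ) ≤ (n:ℝ) := Nat.cast_nonneg n
    nlinarith [mul_le_mul_of_nonneg_right ih (by positivity : (0:ℝ) ≤ ((n:ℝ)+1)*((n:ℝ)+2)),
      mul_le_mul_of_nonneg_right hle ht,
      mul_nonneg (mul_nonneg ht (by positivity : (0:ℝ) ≤ (((n+1).factorial : ℝ))^2)) hn0,
      mul_nonneg ht (by positivity : (0:ℝ) ≤ (((n+1).factorial : ℝ))^2)]

lemma ccf0_eq (n : ℕ) : ccf 0 n * ((n:ℝ)+1) = (((n+1).factorial : ℝ))^2 := by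
  induction n with
  | zero => simp [ccf]
  | succ n ih =>
    have e2 : ccf 0 (n+1) = ccf 0 n * (((n:ℝ)+1)*((n:ℝ)+2)) := by
      rw [ccf_succ]; norm_num
    have hfact : (((n+2).factorial : ℝ))^2 = (((n+1).factorial : ℝ))^2 * ((n:ℝ)+2)^2 := by
      rw [Nat.factorial_succ]; push_cast; ring
    rw [e2, hfact]
    push_cast
    push_cast at ih
    linear_combination ((n:ℝ)+2)^2 * ih

lemma summable_geom1 (hr : r ∈ Set.Ioo (0:ℝ) 1) : Summable (fun n : ℕ => r^(n+1)) := by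
  have := (summable_geometric_of_lt_one hr.1.le hr.2).mul_left r
  refine this.congr fun n => by ring

lemma tsum_geom1 (hr : r ∈ Set.Ioo (0:ℝ) 1) : ∑' n : ℕ, r^(n+1) = r/(1-r) := by
  have h : ∀ n : ℕ, r^(n+1) = r * r^n := fun n => by ring
  rw [tsum_congr h, tsum_mul_left, tsum_geometric_of_lt_one hr.1.le hr.2]
  rw [div_eq_mul_inv]

lemma summable_Hs (hr : r ∈ Set.Ioo (0:ℝ) 1) (ht : 0 ≤ a * (1 - a)) (ht4 : a * (1 - a) ≤ 1/4) :
    Summable (fun n : ℕ => ccf a n / (((n+1).factorial : ℝ))^2 * r ^ (n+1)) := by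
  refine Summable.of_nonneg_of_le
    (fun n => mul_nonneg (div_nonneg (ccf_nonneg ht n) (by positivity)) (pow_nonneg hr.1.le _))
    (fun n => ?_) (summable_geom1 hr)
  have h1 : ccf a n / (((n+1).factorial : ℝ))^2 ≤ 1 := by
    rw [div_le_one (by positivity)]; exact ccf_le ht ht4 n
  calc ccf a n / (((n+1).factorial : ℝ))^2 * r ^ (n+1) ≤ 1 * r^(n+1) :=
        mul_le_mul_of_nonneg_right h1 (pow_nonneg hr.1.le _)
    _ = r^(n+1) := one_mul _

lemma Hs_nonneg (hr : r ∈ Set.Ioo (0:ℝ) 1) (ht : 0 ≤ a * (1 - a)) : 0 ≤ Hs r a :=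
  tsum_nonneg fun n =>
    mul_nonneg (div_nonneg (ccf_nonneg ht n) (by positivity)) (pow_nonneg hr.1.le _)

lemma Hs_le (hr : r ∈ Set.Ioo (0:ℝ) 1) (ht : 0 ≤ a * (1 - a)) (ht4 : a * (1 - a) ≤ 1/4) :
    Hs r a ≤ r/(1-r) := by
  rw [← tsum_geom1 hr]
  refine Summable.tsum_le_tsum (fun n => ?_) (summable_Hs hr ht ht4) (summable_geom1 hr)
  have h1 : ccf a n / (((n+1).factorial : ℝ))^2 ≤ 1 := by
    rw [div_le_one (by positivity)]; exact ccf_le ht ht4 n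
  calc ccf a n / (((n+1).factorial : ℝ))^2 * r ^ (n+1) ≤ 1 * r^(n+1) :=
        mul_le_mul_of_nonneg_right h1 (pow_nonneg hr.1.le _)
    _ = r^(n+1) := one_mul _

lemma F_sub_one_eq (hr : r ∈ Set.Ioo (0:ℝ) 1) (ht : 0 ≤ a * (1 - a)) (ht4 : a * (1 - a) ≤ 1/4) :
    F r a - 1 = (a*(1-a)) * Hs r a := by
  rw [F_sub_one hr ht ht4, Hs, ← tsum_mul_left]
  refine tsum_congr fun n => ?_
  rw [cf_succ']
  ring

lemma Hs_lower (hr : r ∈ Set.Ioo (0:ℝ) 1) (ht : 0 ≤ a * (1 - a)) (ht4 : a * (1 - a) ≤ 1/4) :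
    Hs r 0 ≤ Hs r a := by
  refine Summable.tsum_le_tsum (fun n => ?_) (summable_Hs hr (by norm_num) (by norm_num))
    (summable_Hs hr ht ht4)
  exact mul_le_mul_of_nonneg_right
    (div_le_div_of_nonneg_right (ccf_mono ht n) (by positivity)) (pow_nonneg hr.1.le _)

lemma Hs_upper (hr : r ∈ Set.Ioo (0:ℝ) 1) (ht : 0 ≤ a * (1 - a)) (ht4 : a * (1 - a) ≤ 1/4) :
    Hs r a ≤ Hs r 0 + 2*(a*(1-a)) * (r/(1-r)) := by
  have hsum2 : Summable (fun n : ℕ => ccf 0 n / (((n+1).factorial : ℝ))^2 * r ^ (n+1)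
      + 2*(a*(1-a)) * r^(n+1)) :=
    (summable_Hs hr (by norm_num) (by norm_num)).add ((summable_geom1 hr).mul_left _)
  have h := Summable.tsum_le_tsum (f := fun n : ℕ => ccf a n / (((n+1).factorial : ℝ))^2 * r ^ (n+1))
    (g := fun n : ℕ => ccf 0 n / (((n+1).factorial : ℝ))^2 * r ^ (n+1) + 2*(a*(1-a)) * r^(n+1))
    (fun n => ?_) (summable_Hs hr ht ht4) hsum2
  · rw [Summable.tsum_add (summable_Hs hr (by norm_num) (by norm_num))
      ((summable_geom1 hr).mul_left _), tsum_mul_left, tsum_geom1 hr] at h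
    exact le_trans h (le_of_eq (by rw [Hs]))
  · have hd := ccf_diff ht ht4 n
    have hfpos : (0:ℝ) < (((n+1).factorial : ℝ))^2 := by positivity
    have hrn : (0:ℝ) ≤ r^(n+1) := pow_nonneg hr.1.le _
    have : ccf a n / (((n+1).factorial : ℝ))^2 ≤ ccf 0 n / (((n+1).factorial : ℝ))^2 + 2*(a*(1-a)) := by
      rw [div_add' _ _ _ (ne_of_gt hfpos), div_le_div_iff₀ hfpos hfpos]
      nlinarith
    calc ccf a n / (((n+1).factorial : ℝ))^2 * r ^ (n+1)
        ≤ (ccf 0 n / (((n+1).factorial : ℝ))^2 + 2*(a*(1-a))) * r^(n+1) :=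
          mul_le_mul_of_nonneg_right this hrn
      _ = ccf 0 n / (((n+1).factorial : ℝ))^2 * r ^ (n+1) + 2*(a*(1-a)) * r^(n+1) := by ring

lemma Hs_zero (hr : r ∈ Set.Ioo (0:ℝ) 1) : Hs r 0 = -Real.log (1-r) := by
  have h := hasSum_pow_div_log_of_abs_lt_one (x := r) (by rw [abs_of_pos hr.1]; exact hr.2)
  rw [← h.tsum_eq]
  refine tsum_congr fun n => ?_
  have h1 := ccf0_eq n
  have hfpos : (0:ℝ) < (((n+1).factorial : ℝ))^2 := by positivity
  have hn1 : (0:ℝ) < (n:ℝ)+1 := by positivity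
  rw [div_mul_eq_mul_div, div_eq_div_iff (ne_of_gt hfpos) (ne_of_gt hn1)]
  push_cast
  nlinarith [h1, pow_nonneg hr.1.le (n+1)]

lemma Ioo_mem_one : Set.Ioo (0:ℝ) 1 ∈ nhdsWithin 1 (Set.Iio 1) :=
  Ioo_mem_nhdsLT_of_mem (by norm_num)

lemma Ioo_mem_zero : Set.Ioo (0:ℝ) 1 ∈ nhdsWithin 0 (Set.Ioi 0) :=
  Ioo_mem_nhdsGT_of_mem (by norm_num)

lemma tendsto_t_one : Tendsto (fun a : ℝ => a*(1-a)) (nhdsWithin 1 (Set.Iio 1)) (nhds 0) := by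
  have h : Tendsto (fun a : ℝ => a*(1-a)) (nhds 1) (nhds (1*(1-1))) :=
    (continuous_id.mul (continuous_const.sub continuous_id)).tendsto 1
  simpa using h.mono_left nhdsWithin_le_nhds

lemma tendsto_t_zero : Tendsto (fun a : ℝ => a*(1-a)) (nhdsWithin 0 (Set.Ioi 0)) (nhds 0) := by
  have h : Tendsto (fun a : ℝ => a*(1-a)) (nhds 0) (nhds (0*(1-0))) :=
    (continuous_id.mul (continuous_const.sub continuous_id)).tendsto 0
  simpa using h.mono_left nhdsWithin_le_nhds

lemma tendsto_Hs (hr : r ∈ Set.Ioo (0:ℝ) 1) :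
    Tendsto (fun a => Hs r a) (nhdsWithin 1 (Set.Iio 1)) (nhds (-Real.log (1-r))) := by
  rw [← Hs_zero hr]
  refine tendsto_of_tendsto_of_tendsto_of_le_of_le' (g := fun _ => Hs r 0)
    (h := fun a => Hs r 0 + 2*(a*(1-a)) * (r/(1-r))) tendsto_const_nhds ?_ ?_ ?_
  · have := (tendsto_t_one.const_mul 2).mul_const (r/(1-r))
    simpa using tendsto_const_nhds.add this
  · filter_upwards [Ioo_mem_one] with x hx
    exact Hs_lower (a := x) hr (mem_Ioo_t hx).1.le (mem_Ioo_t hx).2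
  · filter_upwards [Ioo_mem_one] with x hx
    exact Hs_upper (a := x) hr (mem_Ioo_t hx).1.le (mem_Ioo_t hx).2

lemma tendsto_F_one (hr : r ∈ Set.Ioo (0:ℝ) 1) :
    Tendsto (F r) (nhdsWithin 1 (Set.Iio 1)) (nhds 1) := by
  have key : Tendsto (fun a => 1 + (a*(1-a)) * Hs r a) (nhdsWithin 1 (Set.Iio 1)) (nhds 1) := by
    have := tendsto_t_one.mul (tendsto_Hs hr)
    simpa using tendsto_const_nhds.add this
  refine key.congr' ?_
  filter_upwards [Ioo_mem_one] with x hx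
  have := F_sub_one_eq hr (mem_Ioo_t hx).1.le (mem_Ioo_t hx).2
  linarith

lemma tendsto_F_zero (hr : r ∈ Set.Ioo (0:ℝ) 1) :
    Tendsto (F r) (nhdsWithin 0 (Set.Ioi 0)) (nhds 1) := by
  refine tendsto_of_tendsto_of_tendsto_of_le_of_le' (g := fun _ => (1:ℝ))
    (h := fun a => 1 + (a*(1-a)) * (r/(1-r))) tendsto_const_nhds ?_ ?_ ?_
  · have := tendsto_t_zero.mul_const (r/(1-r))
    simpa using tendsto_const_nhds.add this
  · filter_upwards [Ioo_mem_zero] with x hx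
    exact F_ge_one hr (mem_Ioo_t hx).1.le (mem_Ioo_t hx).2
  · filter_upwards [Ioo_mem_zero] with x hx
    obtain ⟨ht, ht4⟩ := mem_Ioo_t hx
    have h1 := F_sub_one_eq hr ht.le ht4
    have h2 := Hs_le hr ht.le ht4
    nlinarith [Hs_nonneg hr ht.le]

lemma tendsto_phi_one (hr : r ∈ Set.Ioo (0:ℝ) 1) :
    Tendsto (phi r) (nhdsWithin 1 (Set.Iio 1)) (nhds 1) := by
  have heta : Tendsto (fun a : ℝ => a/(3-2*a)) (nhdsWithin 1 (Set.Iio 1)) (nhds 1) := by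
    have h : Tendsto (fun a : ℝ => a/(3-2*a)) (nhds 1) (nhds (1/(3-2*1))) :=
      (continuousAt_id.div (by fun_prop) (by norm_num)).tendsto
    norm_num at h
    exact h.mono_left nhdsWithin_le_nhds
  have := heta.div (tendsto_F_one hr) one_ne_zero
  rw [div_one] at this
  exact this

lemma tendsto_phi_zero (hr : r ∈ Set.Ioo (0:ℝ) 1) :
    Tendsto (phi r) (nhdsWithin 0 (Set.Ioi 0)) (nhds 0) := by
  have heta : Tendsto (fun a : ℝ => a/(3-2*a)) (nhdsWithin 0 (Set.Ioi 0)) (nhds 0) := by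
    have h : Tendsto (fun a : ℝ => a/(3-2*a)) (nhds 0) (nhds (0/(3-2*0))) :=
      (continuousAt_id.div (by fun_prop) (by norm_num)).tendsto
    norm_num at h
    exact h.mono_left nhdsWithin_le_nhds
  have := heta.div (tendsto_F_zero hr) one_ne_zero
  rw [zero_div] at this
  exact this

lemma strictAntiOn_f (hr : r ∈ Set.Ioo (0:ℝ) 1) :
    StrictAntiOn (fun a => 1 - phi r a) (Set.Ioo 0 1) := fun x hx y hy hxy => by
  have := strictMonoOn_phi hr hx hy hxy
  dsimp only
  linarith

lemma phi_pos (hr : r ∈ Set.Ioo (0:ℝ) 1) (ha : a ∈ Set.Ioo (0:ℝ) 1) : 0 < phi r a := by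
  obtain ⟨ht, ht4⟩ := mem_Ioo_t ha
  have hF := F_ge_one hr ht.le ht4
  have h3 : (0:ℝ) < 3 - 2*a := by have := ha.2; linarith
  have : (0:ℝ) < a/(3-2*a) := div_pos ha.1 h3
  exact div_pos this (by linarith)

lemma phi_lt_one (hr : r ∈ Set.Ioo (0:ℝ) 1) (ha : a ∈ Set.Ioo (0:ℝ) 1) : phi r a < 1 := by
  obtain ⟨ht, ht4⟩ := mem_Ioo_t ha
  have hF := F_ge_one hr ht.le ht4
  have h3 : (0:ℝ) < 3 - 2*a := by have := ha.2; linarith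
  rw [phi, div_lt_one (by linarith)]
  have : a/(3-2*a) < 1 := by rw [div_lt_one h3]; linarith [ha.2]
  linarith

lemma continuousOn_f (hr : r ∈ Set.Ioo (0:ℝ) 1) :
    ContinuousOn (fun a => 1 - phi r a) (Set.Ioo 0 1) := by
  intro x hx
  exact (continuousAt_const.sub (hasDerivAt_phi hr hx).continuousAt).continuousWithinAt

lemma image_f (hr : r ∈ Set.Ioo (0:ℝ) 1) :
    (fun a => 1 - phi r a) '' (Set.Ioo 0 1) = Set.Ioo 0 1 := by
  apply Set.Subset.antisymm
  · rintro y ⟨x, hx, rfl⟩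
    have h1 := phi_lt_one hr hx
    have h2 := phi_pos hr hx
    exact ⟨by dsimp only; linarith, by dsimp only; linarith⟩
  · intro y hy
    have hf1 : Tendsto (fun a => 1 - phi r a) (nhdsWithin 1 (Set.Iio 1)) (nhds 0) := by
      have h := (tendsto_const_nhds (x := (1:ℝ))).sub (tendsto_phi_one hr)
      simpa using h
    have hf0 : Tendsto (fun a => 1 - phi r a) (nhdsWithin 0 (Set.Ioi 0)) (nhds 1) := by
      have h := (tendsto_const_nhds (x := (1:ℝ))).sub (tendsto_phi_zero hr)
      simpa using h
    have h2 : ∀ᶠ x in nhdsWithin 1 (Set.Iio 1), (1 - phi r x) < y ∧ x ∈ Set.Ioo (0:ℝ) 1 :=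
      (hf1.eventually_lt_const hy.1).and Ioo_mem_one
    obtain ⟨b, hby, hb⟩ := h2.exists
    have hIb : Set.Iio b ∈ nhdsWithin 0 (Set.Ioi 0) :=
      nhdsWithin_le_nhds (Iio_mem_nhds hb.1)
    have h3 : ∀ᶠ x in nhdsWithin 0 (Set.Ioi 0),
        (y < 1 - phi r x ∧ x ∈ Set.Ioo (0:ℝ) 1) ∧ x < b :=
      ((hf0.eventually_const_lt hy.2).and Ioo_mem_zero).and hIb
    obtain ⟨c, ⟨hcy, hc⟩, hcb⟩ := h3.exists
    have hsub : Set.Icc c b ⊆ Set.Ioo (0:ℝ) 1 := fun z hz =>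
      ⟨lt_of_lt_of_le hc.1 hz.1, lt_of_le_of_lt hz.2 hb.2⟩
    have hcont : ContinuousOn (fun a => 1 - phi r a) (Set.Icc c b) :=
      (continuousOn_f hr).mono hsub
    have hIVT := intermediate_value_Ioo' (le_of_lt hcb) hcont
    have hyIn : y ∈ Set.Ioo ((fun a => 1 - phi r a) b) ((fun a => 1 - phi r a) c) := ⟨hby, hcy⟩
    have := hIVT hyIn
    have hsub2 : Set.Ioo c b ⊆ Set.Ioo (0:ℝ) 1 :=
      fun z hz => ⟨lt_trans hc.1 hz.1, lt_trans hz.2 hb.2⟩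
    exact Set.image_mono hsub2 this

lemma tendsto_main (hr : r ∈ Set.Ioo (0:ℝ) 1) :
    Tendsto (fun a => (1 - phi r a)/(1-a)) (nhdsWithin 1 (Set.Iio 1))
      (nhds (3 - Real.log (1-r))) := by
  have hA : Tendsto (fun a : ℝ => a) (nhdsWithin 1 (Set.Iio 1)) (nhds 1) :=
    tendsto_id.mono_left nhdsWithin_le_nhds
  have h3a : Tendsto (fun a : ℝ => 3-2*a) (nhdsWithin 1 (Set.Iio 1)) (nhds 1) := by
    have : Tendsto (fun a : ℝ => 3-2*a) (nhds 1) (nhds (3-2*1)) :=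
      ((continuous_const.sub (continuous_const.mul continuous_id)).tendsto 1)
    norm_num at this
    exact this.mono_left nhdsWithin_le_nhds
  have key : Tendsto (fun a => a * Hs r a / F r a + 3/((3-2*a) * F r a))
      (nhdsWithin 1 (Set.Iio 1)) (nhds (1 * (-Real.log (1-r)) / 1 + 3/(1*1))) := by
    exact ((hA.mul (tendsto_Hs hr)).div (tendsto_F_one hr) one_ne_zero).add
      (tendsto_const_nhds.div (h3a.mul (tendsto_F_one hr)) (by norm_num))
  have hval : 1 * (-Real.log (1-r)) / 1 + 3/(1*1 : ℝ) = 3 - Real.log (1-r) := by ring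
  rw [hval] at key
  refine Tendsto.congr' ?_ key
  filter_upwards [Ioo_mem_one] with x hx
  obtain ⟨ht, ht4⟩ := mem_Ioo_t hx
  have hF1 := F_ge_one hr ht.le ht4
  have hHs := Hs_nonneg (a := x) hr ht.le
  have h3ne : (3:ℝ)-2*x ≠ 0 := by have := hx.2; intro h; linarith
  have h1ne : (1:ℝ)-x ≠ 0 := by have := hx.2; intro h; linarith
  have hrel := F_sub_one_eq hr ht.le ht4
  have hFt : F r x = 1 + x*(1-x)*Hs r x := by linarith
  have hde : (0:ℝ) < 1 + x*(1-x)*Hs r x := by nlinarith [ht]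
  show x * Hs r x / F r x + 3/((3-2*x) * F r x) = (1 - phi r x)/(1-x)
  rw [phi, hFt]
  have hD := hde.ne'
  rw [div_add_div _ _ hD (mul_ne_zero h3ne hD), div_div, one_sub_div (mul_ne_zero h3ne hD), div_div, div_eq_div_iff (mul_ne_zero hD (mul_ne_zero h3ne hD)) (mul_ne_zero (mul_ne_zero h3ne hD) h1ne)]
  ring

end Stmt12

theorem stmt12 (r : ℝ) (hr : r ∈ Set.Ioo (0 : ℝ) 1) :
    StrictAntiOn (fun a : ℝ => 1 - (a / (3 - 2 * a)) / hyp a (1 - a) 1 r) (Set.Ioo 0 1) ∧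
    (fun a : ℝ => 1 - (a / (3 - 2 * a)) / hyp a (1 - a) 1 r) '' (Set.Ioo 0 1) =
      Set.Ioo 0 1 ∧
    Filter.Tendsto
      (fun a : ℝ => (1 - (a / (3 - 2 * a)) / hyp a (1 - a) 1 r) / (1 - a))
      (nhdsWithin 1 (Set.Iio 1)) (nhds (3 - Real.log (1 - r))) := by
  have hfun : ∀ a : ℝ, hyp a (1 - a) 1 r = Stmt12.F r a := fun a => Stmt12.hyp_eq r a
  simp only [hfun]
  exact ⟨Stmt12.strictAntiOn_f hr, Stmt12.image_f hr, Stmt12.tendsto_main hr⟩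
end
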